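/- arXiv:1803.09962 — 4 statements merged into one kernel-verified Lean document; each statement's English description precedes it below -/
import Mathlib

section
/- For the Weierstrass curve y² + 3ν·xy + (ν³−1)·y = x³ over B, the j-invariant satisfies j·(ν³−1)³ = 27ν³(ν³+8)³. -/
open Polynomial

noncomputable section

/-- The Eisenstein integers `ℤ[ω] = ℤ[X]/(X² + X + 1)`. -/
abbrev EisensteinInt : Type := AdjoinRoot (X ^ 2 + X + 1 : ℤ[X])

/-- `A = ℤ[1/3][ω]`. -/
abbrev RingA : Type := Localization.Away (3 : EisensteinInt)

/-- `B = ℤ[1/3][ω, ν, (ν³ - 1)⁻¹]`. -/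
abbrev RingB : Type := Localization.Away ((X : (RingA)[X]) ^ 3 - 1)

/-- The image of ω in B. -/
def ωB : RingB := algebraMap (RingA)[X] RingB
  (C (algebraMap EisensteinInt RingA (AdjoinRoot.root _)))

/-- The image of ν in B. -/
def νB : RingB := algebraMap (RingA)[X] RingB X


/-- The Weierstrass curve `y² + 3ν·xy + (ν³−1)·y = x³` over `B`. -/
def curveC : WeierstrassCurve RingB :=
  { a₁ := 3 * νB, a₂ := 0, a₃ := νB ^ 3 - 1, a₄ := 0, a₆ := 0 }

/-! For `a₂ = a₄ = a₆ = 0` one has `c₄ = a₁(a₁³ − 24a₃)` and `Δ = a₃³(a₁³ − 27a₃)`. With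
`a₁ = 3ν`, `a₃ = ν³ − 1` the factor `a₁³ − 27a₃` collapses to the constant `27`, so
`j · 27(ν³ − 1)³ = c₄³ = 27 · 27ν³(ν³ + 8)³`, and `27` may be cancelled because it divides the
unit `Δ`. -/

namespace WeierstrassCurve

variable {R : Type*} [CommRing R] {W : WeierstrassCurve R}

lemma j_mul_Δ (W : WeierstrassCurve R) [W.IsElliptic] : W.j * W.Δ = W.c₄ ^ 3 := by
  rw [j, mul_right_comm, ← coe_Δ', Units.inv_mul, one_mul]

lemma c₄_of_a₂_a₄_eq_zero (ha₂ : W.a₂ = 0) (ha₄ : W.a₄ = 0) :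
    W.c₄ = W.a₁ * (W.a₁ ^ 3 - 24 * W.a₃) := by
  rw [c₄, b₂, b₄, ha₂, ha₄]
  ring

lemma Δ_of_a₂_a₄_a₆_eq_zero (ha₂ : W.a₂ = 0) (ha₄ : W.a₄ = 0) (ha₆ : W.a₆ = 0) :
    W.Δ = W.a₃ ^ 3 * (W.a₁ ^ 3 - 27 * W.a₃) := by
  rw [Δ, b₂, b₄, b₆, b₈, ha₂, ha₄, ha₆]
  ring

lemma isUnit_a₁_pow_three_sub_of_a₂_a₄_a₆_eq_zero [W.IsElliptic]
    (ha₂ : W.a₂ = 0) (ha₄ : W.a₄ = 0) (ha₆ : W.a₆ = 0) : IsUnit (W.a₁ ^ 3 - 27 * W.a₃) :=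
  isUnit_of_mul_isUnit_right (Δ_of_a₂_a₄_a₆_eq_zero ha₂ ha₄ ha₆ ▸ W.isUnit_Δ)

lemma mul_j_mul_a₃_pow_three_of_a₂_a₄_a₆_eq_zero [W.IsElliptic]
    (ha₂ : W.a₂ = 0) (ha₄ : W.a₄ = 0) (ha₆ : W.a₆ = 0) :
    (W.a₁ ^ 3 - 27 * W.a₃) * (W.j * W.a₃ ^ 3) = W.a₁ ^ 3 * (W.a₁ ^ 3 - 24 * W.a₃) ^ 3 := by
  have := W.j_mul_Δ
  rw [Δ_of_a₂_a₄_a₆_eq_zero ha₂ ha₄ ha₆, c₄_of_a₂_a₄_eq_zero ha₂ ha₄] at this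
  linear_combination this

end WeierstrassCurve

/-- For the curve `y² + 3ν·xy + (ν³−1)·y = x³` over `B` (which is elliptic),
the j-invariant satisfies `j·(ν³−1)³ = 27ν³(ν³+8)³`. -/
theorem stmt7 (h : curveC.IsElliptic) :
    curveC.j * (νB ^ 3 - 1) ^ 3 = 27 * νB ^ 3 * (νB ^ 3 + 8) ^ 3 := by
  have h27 : curveC.a₁ ^ 3 - 27 * curveC.a₃ = 27 := by
    simp only [curveC]
    ring
  have hunit := WeierstrassCurve.isUnit_a₁_pow_three_sub_of_a₂_a₄_a₆_eq_zero
    (W := curveC) rfl rfl rfl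
  have key := WeierstrassCurve.mul_j_mul_a₃_pow_three_of_a₂_a₄_a₆_eq_zero
    (W := curveC) rfl rfl rfl
  rw [h27] at hunit key
  apply hunit.mul_left_cancel
  rw [show νB ^ 3 - 1 = curveC.a₃ from rfl, key]
  simp only [curveC]
  ring
end
end

section
/- The point (0,0) lies on the affine Weierstrass curve y² + 3ν·xy + (ν³−1)·y = x³ over B and is a point of order exactly 3 in the group of points. -/
/-! The tangent line to `y² + a₁xy + a₃y = x³` at the origin is `y = 0`, which meets the curve
only in `x³ = 0`: the origin is a flex, so the tangent construction gives `2P = -P`. -/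

namespace WeierstrassCurve.Affine

variable {F : Type*} [Field F] {W : Affine F}

lemma a₃_ne_zero_of_nonsingular_zero (h : W.Nonsingular 0 0) (h₄ : W.a₄ = 0) : W.a₃ ≠ 0 :=
  (nonsingular_zero.mp h).2.resolve_right (not_not.mpr h₄)

lemma zero_ne_negY_zero_of_a₃_ne_zero (h₃ : W.a₃ ≠ 0) : (0 : F) ≠ W.negY 0 0 := by
  simpa [negY, eq_comm] using h₃

lemma slope_zero_zero_of_a₄_eq_zero [DecidableEq F] (h₃ : W.a₃ ≠ 0) (h₄ : W.a₄ = 0) :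
    W.slope 0 0 0 0 = 0 := by
  rw [slope_of_Y_ne rfl (zero_ne_negY_zero_of_a₃_ne_zero h₃)]
  simp [h₄]

namespace Point

variable [DecidableEq F]

lemma some_zero_zero_add_self (h : W.Nonsingular 0 0) (h₂ : W.a₂ = 0) (h₄ : W.a₄ = 0) :
    some _ _ h + some _ _ h = -some _ _ h := by
  have h₃ := a₃_ne_zero_of_nonsingular_zero h h₄
  rw [add_self_of_Y_ne (zero_ne_negY_zero_of_a₃_ne_zero h₃), neg_some, some.injEq,
    slope_zero_zero_of_a₄_eq_zero h₃ h₄]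
  constructor
  · simp [addX, h₂]
  · simp [addY, negAddY, addX, h₂]

lemma addOrderOf_some_zero_zero (h : W.Nonsingular 0 0) (h₂ : W.a₂ = 0) (h₄ : W.a₄ = 0) :
    addOrderOf (some _ _ h) = 3 := by
  have : Fact (Nat.Prime 3) := ⟨Nat.prime_three⟩
  refine addOrderOf_eq_prime ?_ (some_ne_zero h)
  rw [succ_nsmul, two_nsmul, some_zero_zero_add_self h h₂ h₄, neg_add_cancel]

end Point

end WeierstrassCurve.Affine

open WeierstrassCurve.Affine

theorem stmt8_general (F : Type*) [Field F] (ν : F) (hν : ν ^ 3 ≠ 1)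
    (W : WeierstrassCurve.Affine F)
    (hW : W = { a₁ := 3 * ν, a₂ := 0, a₃ := ν ^ 3 - 1, a₄ := 0, a₆ := 0 }) :
    ∃ h : W.Nonsingular 0 0,
      W.Equation 0 0 ∧ open Classical in addOrderOf (WeierstrassCurve.Affine.Point.some (x := 0) (y := 0) h) = 3 := by
  have h : W.Nonsingular 0 0 := by
    rw [nonsingular_zero, hW]
    exact ⟨rfl, Or.inl (sub_ne_zero.mpr hν)⟩
  classical
  exact ⟨h, h.1, Point.addOrderOf_some_zero_zero h (by rw [hW]) (by rw [hW])⟩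

/-- Over any field `F` in which `3 ≠ 0`, with `ν ∈ F` such that `ν³ ≠ 1` (e.g. the
fraction field of `B₀ = ℤ[1/3][ν, (ν³−1)⁻¹]` with `ν` transcendental), the point
`(0, 0)` lies on the elliptic curve `y² + 3ν·xy + (ν³−1)·y = x³` and has order
exactly `3` in the group of points. -/
theorem stmt8 (F : Type*) [Field F] (ν : F) (h3 : (3 : F) ≠ 0) (hν : ν ^ 3 ≠ 1)
    (W : WeierstrassCurve.Affine F)
    (hW : W = { a₁ := 3 * ν, a₂ := 0, a₃ := ν ^ 3 - 1, a₄ := 0, a₆ := 0 }) :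
    ∃ h : W.Nonsingular 0 0,
      W.Equation 0 0 ∧ open Classical in addOrderOf (WeierstrassCurve.Affine.Point.some (x := 0) (y := 0) h) = 3 :=
  stmt8_general F ν hν W hW
end

section
/- The point Q = (−(ν−ω²)(ν−ω), (ν−ω²)²(ν−ω)) on the elliptic curve y² + 3ν·xy + (ν³−1)·y = x³ has order exactly 3. -/
/-!
With `p, q, r = ν - ω², ν - ω, ν - 1` we have `3ν = p + q + r` and `ν³ - 1 = pqr`, so the curve is
`y² + (p + q + r)xy + pqr·y = x³`, and `Q = (-pq, p²q)` lies on it by a ring identity.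
The tangent at `Q` has slope `-(2 + ω)p`, and the third intersection of this tangent with the curve
is `Q` itself: `Q` is a flex, so `2Q = -Q`.
-/

open WeierstrassCurve.Affine

namespace WeierstrassCurve.Affine.Point

variable {F : Type*} [Field F] [DecidableEq F] {W : WeierstrassCurve.Affine F} {x y : F}

lemma some_add_self_eq_neg (h : W.Nonsingular x y) (hy : y ≠ W.negY x y)
    (hx : W.addX x x (W.slope x x y y) = x) : some _ _ h + some _ _ h = -some _ _ h := by
  have hy' : W.negAddY x x y (W.slope x x y y) = y := by
    rw [negAddY, hx, sub_self, mul_zero, zero_add]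
  rw [add_self_of_Y_ne' hy]
  congr 2

lemma addOrderOf_some_eq_three (h : W.Nonsingular x y) (hy : y ≠ W.negY x y)
    (hx : W.addX x x (W.slope x x y y) = x) : addOrderOf (some _ _ h) = 3 := by
  have : Fact (Nat.Prime 3) := ⟨Nat.prime_three⟩
  refine addOrderOf_eq_prime ?_ (some_ne_zero h)
  rw [succ_nsmul, two_nsmul, some_add_self_eq_neg h hy hx, neg_add_cancel]

end WeierstrassCurve.Affine.Point

def elemSymmCurve {K : Type*} [Field K] (p q r : K) : WeierstrassCurve.Affine K :=
  { a₁ := p + q + r, a₂ := 0, a₃ := p * q * r, a₄ := 0, a₆ := 0 }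

namespace elemSymmCurve

variable {K : Type*} [Field K] {p q r ζ : K}

lemma equation (p q r : K) : (elemSymmCurve p q r).Equation (-(p * q)) (p ^ 2 * q) := by
  rw [equation_iff]
  simp only [elemSymmCurve]
  ring

lemma sub_negY (p q r : K) :
    p ^ 2 * q - (elemSymmCurve p q r).negY (-(p * q)) (p ^ 2 * q) = p * q * (p - q) := by
  simp only [negY, elemSymmCurve]
  ring

lemma ne_negY (hp : p ≠ 0) (hq : q ≠ 0) (hpq : p ≠ q) :
    p ^ 2 * q ≠ (elemSymmCurve p q r).negY (-(p * q)) (p ^ 2 * q) := by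
  rw [ne_eq, ← sub_eq_zero, sub_negY]
  exact mul_ne_zero (mul_ne_zero hp hq) (sub_ne_zero.2 hpq)

lemma nonsingular (hp : p ≠ 0) (hq : q ≠ 0) (hpq : p ≠ q) :
    (elemSymmCurve p q r).Nonsingular (-(p * q)) (p ^ 2 * q) :=
  (nonsingular_iff _ _).2 ⟨equation p q r, Or.inr (ne_negY hp hq hpq)⟩

variable [DecidableEq K]

lemma slope (hr : r - p = ζ * (p - q)) (hp : p ≠ 0) (hq : q ≠ 0) (hpq : p ≠ q) :
    (elemSymmCurve p q r).slope (-(p * q)) (-(p * q)) (p ^ 2 * q) (p ^ 2 * q) = -(2 + ζ) * p := by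
  rw [slope_of_Y_ne rfl (ne_negY hp hq hpq), sub_negY,
    div_eq_iff (mul_ne_zero (mul_ne_zero hp hq) (sub_ne_zero.2 hpq))]
  simp only [elemSymmCurve]
  linear_combination -p ^ 2 * q * hr

lemma addX_slope (hζ : 1 + ζ + ζ ^ 2 = 0) (hr : r - p = ζ * (p - q)) (hp : p ≠ 0) (hq : q ≠ 0)
    (hpq : p ≠ q) :
    (elemSymmCurve p q r).addX (-(p * q)) (-(p * q))
      ((elemSymmCurve p q r).slope (-(p * q)) (-(p * q)) (p ^ 2 * q) (p ^ 2 * q)) = -(p * q) := by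
  rw [slope hr hp hq hpq]
  simp only [addX, elemSymmCurve]
  linear_combination p * q * hζ - (2 + ζ) * p * hr

lemma addOrderOf_some (hζ : 1 + ζ + ζ ^ 2 = 0) (hr : r - p = ζ * (p - q)) (hp : p ≠ 0)
    (hq : q ≠ 0) (hpq : p ≠ q) : addOrderOf (Point.some _ _ (nonsingular (r := r) hp hq hpq)) = 3 :=
  Point.addOrderOf_some_eq_three _ (ne_negY hp hq hpq) (addX_slope hζ hr hp hq hpq)

end elemSymmCurve

open Classical in
/-- Over any field `K` in which `3 ≠ 0`, containing a primitive cube root of unity `ω`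
(so `1 + ω + ω² = 0`) and an element `ν` with `ν³ ≠ 1` (e.g. the fraction field of
`B = ℤ[1/3][ω, ν, (ν³−1)⁻¹]/(1+ω+ω²)`), the point
`Q = (−(ν−ω²)(ν−ω), (ν−ω²)²(ν−ω))` on the elliptic curve
`y² + 3ν·xy + (ν³−1)·y = x³` has order exactly `3`. -/
theorem stmt11 (K : Type*) [Field K] (ω ν : K) (h3 : (3 : K) ≠ 0)
    (hω : 1 + ω + ω ^ 2 = 0) (hν : ν ^ 3 ≠ 1)
    (W : WeierstrassCurve.Affine K)
    (hW : W = { a₁ := 3 * ν, a₂ := 0, a₃ := ν ^ 3 - 1, a₄ := 0, a₆ := 0 }) :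
    ∃ h : W.Nonsingular (-((ν - ω ^ 2) * (ν - ω))) ((ν - ω ^ 2) ^ 2 * (ν - ω)),
      addOrderOf (WeierstrassCurve.Affine.Point.some _ _ h) = 3 := by
  have hprod : ν ^ 3 - 1 = (ν - ω ^ 2) * (ν - ω) * (ν - 1) := by
    linear_combination (ν ^ 2 - ω * ν + ω - 1) * hω
  have hW' : W = elemSymmCurve (ν - ω ^ 2) (ν - ω) (ν - 1) := by
    rw [hW, hprod, elemSymmCurve]
    congr 1
    linear_combination hω
  have hp : ν - ω ^ 2 ≠ 0 := fun h ↦ hν (by linear_combination hprod + (ν - ω) * (ν - 1) * h)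
  have hq : ν - ω ≠ 0 := fun h ↦ hν (by linear_combination hprod + (ν - ω ^ 2) * (ν - 1) * h)
  -- `(p - q)² = (ω - ω²)² = -3`
  have hpq : ν - ω ^ 2 ≠ ν - ω := fun h ↦
    h3 (by linear_combination (ω ^ 2 - ω) * h + (ω ^ 2 - 3 * ω + 3) * hω)
  subst hW'
  exact ⟨_, elemSymmCurve.addOrderOf_some hω (by linear_combination (ω - 1) * hω) hp hq hpq⟩
end

section
/- The map β* determined by β*(ω) = ω and β*(ν) = (ν+2)/(ν−1) defines a ring automorphism of B = Z[1/3][ω, ν, (ν³−1)⁻¹]/(1+ω+ω²). -/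
/-! The map `ν ↦ (ν + 2)/(ν - 1)` is an involution, and since `(ν + 2)/(ν - 1) - 1 = 3/(ν - 1)`
it sends `ν³ - 1` to `9 (ν² + ν + 1)/(ν - 1)³`, a unit as soon as `3` is. So over any ring `A` in
which `3` is invertible it extends, by the universal properties of `A[X]` and of the localization,
to an `A`-algebra endomorphism of `A[ν, (ν³ - 1)⁻¹]` whose square is the identity, hence to an
automorphism fixing `A`; take `A = ℤ[1/3][ω]`. -/

open Polynomial

noncomputable section

section MoebiusInvolution

variable {S : Type*} [CommRing S] {ν t : S}

theorem isUnit_pow_three_sub_one_iff :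
    IsUnit (ν ^ 3 - 1) ↔ IsUnit (ν - 1) ∧ IsUnit (ν ^ 2 + ν + 1) := by
  rw [show ν ^ 3 - 1 = (ν - 1) * (ν ^ 2 + ν + 1) by ring, IsUnit.mul_iff]

-- `Ring.inverse` is `0` off the units, hence the hypothesis `IsUnit (ν - 1)` below.
def moebiusInvolution (ν : S) : S := (ν + 2) * Ring.inverse (ν - 1)

theorem moebiusInvolution_mul_sub_one (hν : IsUnit (ν - 1)) :
    moebiusInvolution ν * (ν - 1) = ν + 2 := by
  rw [moebiusInvolution, mul_assoc, Ring.inverse_mul_cancel _ hν, mul_one]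

theorem eq_moebiusInvolution_of_mul_sub_one_eq (hν : IsUnit (ν - 1)) (ht : t * (ν - 1) = ν + 2) :
    t = moebiusInvolution ν :=
  hν.mul_left_injective (ht.trans (moebiusInvolution_mul_sub_one hν).symm)

theorem moebiusInvolution_sub_one (hν : IsUnit (ν - 1)) :
    moebiusInvolution ν - 1 = 3 * Ring.inverse (ν - 1) := by
  rw [moebiusInvolution]
  linear_combination Ring.mul_inverse_cancel _ hν

theorem moebiusInvolution_pow_three_sub_one (hν : IsUnit (ν - 1)) :
    moebiusInvolution ν ^ 3 - 1 = 9 * (ν ^ 2 + ν + 1) * Ring.inverse (ν - 1) ^ 3 := by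
  set u := Ring.inverse (ν - 1)
  rw [moebiusInvolution]
  linear_combination (((ν - 1) * u) ^ 2 + (ν - 1) * u + 1) * Ring.mul_inverse_cancel _ hν

theorem map_moebiusInvolution {T F : Type*} [CommRing T] [FunLike F S T] [RingHomClass F S T]
    (f : F) (hν : IsUnit (ν - 1)) : f (moebiusInvolution ν) = moebiusInvolution (f ν) := by
  have hfν : IsUnit (f ν - 1) := by simpa using hν.map f
  refine eq_moebiusInvolution_of_mul_sub_one_eq hfν ?_
  have := congr_arg f (moebiusInvolution_mul_sub_one hν)
  rwa [map_mul, map_sub, map_one, map_add, map_ofNat] at this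

variable (h3 : IsUnit (3 : S))
include h3

theorem isUnit_moebiusInvolution_sub_one (hν : IsUnit (ν - 1)) :
    IsUnit (moebiusInvolution ν - 1) := by
  rw [moebiusInvolution_sub_one hν]
  exact h3.mul (isUnit_ringInverse.mpr hν)

theorem isUnit_moebiusInvolution_pow_three_sub_one (hν : IsUnit (ν ^ 3 - 1)) :
    IsUnit (moebiusInvolution ν ^ 3 - 1) := by
  obtain ⟨hν₁, hν₂⟩ := isUnit_pow_three_sub_one_iff.mp hν
  rw [moebiusInvolution_pow_three_sub_one hν₁, show (9 : S) = 3 ^ 2 by norm_num]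
  exact ((h3.pow 2).mul hν₂).mul ((isUnit_ringInverse.mpr hν₁).pow 3)

theorem moebiusInvolution_moebiusInvolution (hν : IsUnit (ν - 1)) :
    moebiusInvolution (moebiusInvolution ν) = ν := by
  refine (eq_moebiusInvolution_of_mul_sub_one_eq (isUnit_moebiusInvolution_sub_one h3 hν) ?_).symm
  rw [moebiusInvolution_sub_one hν, moebiusInvolution]
  linear_combination (2 : S) * Ring.mul_inverse_cancel _ hν

end MoebiusInvolution

section AwayCubeSubOne

variable (A : Type*) [CommRing A]

local notation "𝔹" => Localization.Away ((X : A[X]) ^ 3 - 1)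

theorem isUnit_algebraMap_X_pow_three_sub_one : IsUnit (algebraMap A[X] 𝔹 X ^ 3 - 1) := by
  have := IsLocalization.Away.algebraMap_isUnit (S := 𝔹) ((X : A[X]) ^ 3 - 1)
  rwa [map_sub, map_pow, map_one] at this

theorem isUnit_algebraMap_X_sub_one : IsUnit (algebraMap A[X] 𝔹 X - 1) :=
  (isUnit_pow_three_sub_one_iff.mp (isUnit_algebraMap_X_pow_three_sub_one A)).1

variable {A}

theorem isUnit_three_away (h3 : IsUnit (3 : A)) : IsUnit (3 : 𝔹) := by
  simpa only [map_ofNat] using h3.map (algebraMap A 𝔹)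

theorem isUnit_aeval_moebiusInvolution (h3 : IsUnit (3 : A)) :
    IsUnit (aeval (moebiusInvolution (algebraMap A[X] 𝔹 X)) ((X : A[X]) ^ 3 - 1)) := by
  simpa using isUnit_moebiusInvolution_pow_three_sub_one (isUnit_three_away h3)
    (isUnit_algebraMap_X_pow_three_sub_one A)

def moebiusAlgHom (h3 : IsUnit (3 : A)) : 𝔹 →ₐ[A] 𝔹 :=
  IsLocalization.Away.liftAlgHom ((X : A[X]) ^ 3 - 1) (isUnit_aeval_moebiusInvolution h3)

variable (h3 : IsUnit (3 : A))

theorem moebiusAlgHom_algebraMap_X :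
    moebiusAlgHom h3 (algebraMap A[X] 𝔹 X) = moebiusInvolution (algebraMap A[X] 𝔹 X) := by
  simp [moebiusAlgHom, IsLocalization.Away.liftAlgHom_apply, IsLocalization.Away.lift_eq]

theorem moebiusAlgHom_comp_self : (moebiusAlgHom h3).comp (moebiusAlgHom h3) = AlgHom.id A 𝔹 := by
  apply IsLocalization.algHom_ext (Submonoid.powers ((X : A[X]) ^ 3 - 1))
  apply Polynomial.algHom_ext
  have hX := isUnit_algebraMap_X_sub_one A
  change moebiusAlgHom h3 (moebiusAlgHom h3 (algebraMap A[X] 𝔹 X)) = algebraMap A[X] 𝔹 X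
  rw [moebiusAlgHom_algebraMap_X, map_moebiusInvolution _ hX, moebiusAlgHom_algebraMap_X,
    moebiusInvolution_moebiusInvolution (isUnit_three_away h3) hX]

def moebiusAlgEquiv : 𝔹 ≃ₐ[A] 𝔹 :=
  AlgEquiv.ofAlgHom (moebiusAlgHom h3) (moebiusAlgHom h3) (moebiusAlgHom_comp_self h3)
    (moebiusAlgHom_comp_self h3)

theorem moebiusAlgEquiv_algebraMap_X :
    moebiusAlgEquiv h3 (algebraMap A[X] 𝔹 X) = moebiusInvolution (algebraMap A[X] 𝔹 X) :=
  moebiusAlgHom_algebraMap_X h3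

end AwayCubeSubOne

/-- There is a ring automorphism `β*` of `B = ℤ[1/3][ω, ν, (ν³−1)⁻¹]/(1+ω+ω²)` with
`β*(ω) = ω` and `β*(ν) = (ν+2)/(ν−1)` (note `ν−1` is invertible in `B`, so the latter
condition is expressed as `β*(ν)·(ν−1) = ν+2` together with invertibility of `ν−1`). -/
theorem stmt12 :
    IsUnit (νB - 1) ∧
    ∃ β : RingB ≃+* RingB, β ωB = ωB ∧ β νB * (νB - 1) = νB + 2 := by
  have h3 : IsUnit (3 : RingA) := by
    simpa only [map_ofNat] using
      IsLocalization.Away.algebraMap_isUnit (S := RingA) (3 : EisensteinInt)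
  refine ⟨isUnit_algebraMap_X_sub_one RingA, (moebiusAlgEquiv h3).toRingEquiv, ?_, ?_⟩
  · rw [ωB, ← Polynomial.algebraMap_eq, ← IsScalarTower.algebraMap_apply]
    exact (moebiusAlgEquiv h3).commutes _
  · exact (moebiusAlgEquiv_algebraMap_X h3).symm ▸
      moebiusInvolution_mul_sub_one (isUnit_algebraMap_X_sub_one RingA)
end
end
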